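/- Let y be a B-valued circular element in a B-valued *-noncommutative probability space. Then for all n,m,k ≥ 0: E((yy*)^n (y*y)^m (yy*)^k) = E((yy*)^n E((y*y)^m) (yy*)^k). -/

import Mathlib

/-!
Encode words in `y, y*` with coefficients in `B` as lists of letters. The words `(yy*)ⁿ` and
`(yy*)ᵏ` alternate starting with `y`, while `(y*y)ᵐ`, placed after an even number of letters,
alternates starting with `y*`. The circular recursion pairs the first letter with a later letter of
the opposite kind, and words of odd length have expectation zero, so only partners at odd distance
contribute. Inside an alternating stretch such a partner is automatically of the opposite kind,
whereas a letter of the middle block at odd distance from an outer letter is of the same kind.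
Hence outer letters are never paired into the middle block, and expanding along the first letter
(by induction on the length of the prefix) absorbs the block into the coefficient of the letter
just before it as `E((y*y)ᵐ)`.
-/

open scoped BigOperators

/-- The word `y^{ε(1)} b₁ ⋯ y^{ε(n)} bₙ` encoded by a list of pairs
`(ε(j), bⱼ)`, where `true` stands for `y` and `false` for `y*`. -/
noncomputable def cword {A : Type*} [Monoid A] [StarMul A]
    (y : A) (l : List (Bool × A)) : A :=
  (l.map fun p => (if p.1 then y else star y) * p.2).prod

/-- `y` is B-valued circular with second-order cumulant maps
`β true = β_{(1,2)}`, `β false = β_{(2,1)}`. -/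
def IsCircularWith {A : Type*} [Ring A] [StarRing A] [Algebra ℂ A] [StarModule ℂ A]
    (B : StarSubalgebra ℂ A) (E : A →ₗ[ℂ] A)
    (y : A) (β : Bool → A →ₗ[ℂ] A) : Prop :=
  ∀ (ε : Bool) (b : A), b ∈ B → ∀ l : List (Bool × A), (∀ q ∈ l, q.2 ∈ B) →
    E (cword y ((ε, b) :: l)) =
      ∑ j : Fin l.length,
        if (l.get j).1 ≠ ε then
          β ε (b * E (cword y (l.take (j : ℕ)))) * (l.get j).2 *
            E (cword y (l.drop ((j : ℕ) + 1)))
        else 0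

section Splits

variable {α M : Type*} [AddCommMonoid M]

def sumSplits (F : List α → α → List α → M) (l : List α) : M :=
  ∑ j : Fin l.length, F (l.take j) (l.get j) (l.drop (j + 1))

@[simp] lemma sumSplits_nil (F : List α → α → List α → M) : sumSplits F [] = 0 := by
  simp [sumSplits]

lemma sumSplits_cons (F : List α → α → List α → M) (x : α) (s : List α) :
    sumSplits F (x :: s) = F [] x s + sumSplits (fun p => F (x :: p)) s :=
  Fin.sum_univ_succ _

lemma sumSplits_append (F : List α → α → List α → M) (l₁ l₂ : List α) :
    sumSplits F (l₁ ++ l₂) =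
      sumSplits (fun p x s => F p x (s ++ l₂)) l₁ + sumSplits (fun p => F (l₁ ++ p)) l₂ := by
  induction l₁ generalizing F with
  | nil => simp
  | cons x l₁ ih => simp only [List.cons_append, sumSplits_cons, ih, add_assoc]

lemma sumSplits_congr {F G : List α → α → List α → M} {l : List α}
    (h : ∀ p x s, l = p ++ x :: s → F p x s = G p x s) : sumSplits F l = sumSplits G l := by
  induction l generalizing F G with
  | nil => simp
  | cons y l ih =>
    rw [sumSplits_cons, sumSplits_cons, h [] y l rfl,
      ih fun p x s hl => h (y :: p) x s (by simp [hl])]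

lemma sumSplits_eq_zero {F : List α → α → List α → M} {l : List α}
    (h : ∀ p x s, l = p ++ x :: s → F p x s = 0) : sumSplits F l = 0 := by
  rw [sumSplits_congr h]
  exact Finset.sum_const_zero

lemma sumSplits_mul_right {R : Type*} [NonUnitalNonAssocSemiring R]
    (F : List α → α → List α → R) (l : List α) (c : R) :
    sumSplits (fun p x s => F p x s * c) l = sumSplits F l * c :=
  (Finset.sum_mul ..).symm

end Splits

section Alternating

variable {α : Type*}

def Alternating : Bool → List (Bool × α) → Prop
  | _, [] => True
  | ε, x :: l => x.1 = ε ∧ Alternating (!ε) l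

@[simp] lemma alternating_nil (ε : Bool) : Alternating ε ([] : List (Bool × α)) := trivial

@[simp] lemma alternating_cons {ε : Bool} {x : Bool × α} {l : List (Bool × α)} :
    Alternating ε (x :: l) ↔ x.1 = ε ∧ Alternating (!ε) l := Iff.rfl

lemma alternating_append {ε : Bool} {l₁ l₂ : List (Bool × α)} :
    Alternating ε (l₁ ++ l₂) ↔
      Alternating ε l₁ ∧ Alternating (if Even l₁.length then ε else !ε) l₂ := by
  induction l₁ generalizing ε with
  | nil => simp
  | cons x l ih =>
    simp only [List.cons_append, alternating_cons, ih, List.length_cons, Nat.even_add_one,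
      and_assoc]
    split_ifs <;> simp

lemma Alternating.of_append_left {ε : Bool} {l₁ l₂ : List (Bool × α)}
    (h : Alternating ε (l₁ ++ l₂)) : Alternating ε l₁ :=
  (alternating_append.1 h).1

lemma Alternating.fst_eq_iff {ε : Bool} {p s : List (Bool × α)} {x : Bool × α}
    (h : Alternating ε (p ++ x :: s)) : x.1 = ε ↔ Even p.length := by
  have := (alternating_append.1 h).2.1
  split_ifs at this with hp <;> simp [this, hp]

lemma Alternating.of_append_cons {ε : Bool} {p s : List (Bool × α)} {x : Bool × α}
    (h : Alternating ε (p ++ x :: s)) : Alternating (!x.1) s :=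
  (alternating_append.1 h).2.1 ▸ (alternating_append.1 h).2.2

lemma Alternating.odd_length_of_fst_eq {ε : Bool} {u p s : List (Bool × α)} {a x : Bool × α}
    (hu : Alternating ε (u ++ [a])) (hv : Alternating a.1 (p ++ x :: s)) (hx : x.1 = ε) :
    Odd (u ++ a :: p).length := by
  have hup : Even (u.length + p.length) := by
    rw [Nat.even_add, ← hu.fst_eq_iff, ← hv.fst_eq_iff, hx, eq_comm]
  rw [List.length_append, List.length_cons, ← add_assoc]
  exact hup.add_one

end Alternating

section AltWord

variable {A : Type*} [One A]

def altWord (ε : Bool) (n : ℕ) : List (Bool × A) :=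
  (List.replicate n [(ε, 1), (!ε, 1)]).flatten

lemma length_altWord (ε : Bool) (n : ℕ) : (altWord (A := A) ε n).length = 2 * n := by
  simp [altWord, mul_comm]

lemma alternating_altWord (ε : Bool) (n : ℕ) : Alternating ε (altWord (A := A) ε n) := by
  induction n with
  | zero => simp [altWord]
  | succ n ih => simpa [altWord, List.replicate_succ] using ih

lemma snd_of_mem_altWord {ε : Bool} {n : ℕ} {q : Bool × A} (hq : q ∈ altWord ε n) : q.2 = 1 := by
  simp only [altWord, List.mem_flatten, List.mem_replicate] at hq
  obtain ⟨l, ⟨-, rfl⟩, hq⟩ := hq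
  rcases List.mem_pair.1 hq with rfl | rfl <;> rfl

end AltWord

section Words

variable {A : Type*} [Monoid A] [StarMul A]

@[simp] lemma cword_nil (y : A) : cword y [] = 1 := rfl

lemma cword_cons (y : A) (x : Bool × A) (l : List (Bool × A)) :
    cword y (x :: l) = (if x.1 then y else star y) * x.2 * cword y l := by
  simp [cword, mul_assoc]

lemma cword_append (y : A) (l₁ l₂ : List (Bool × A)) :
    cword y (l₁ ++ l₂) = cword y l₁ * cword y l₂ := by
  simp [cword]

lemma cword_altWord (y : A) (ε : Bool) (n : ℕ) :
    cword y (altWord ε n) = cword y [(ε, 1), (!ε, 1)] ^ n := by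
  simp [altWord, cword, List.map_flatten, List.prod_flatten]

end Words

section Circular

variable {A : Type*} [Ring A] [StarRing A] [Algebra ℂ A] [StarModule ℂ A]
  {B : StarSubalgebra ℂ A} {E : A →ₗ[ℂ] A} {y : A} {β : Bool → A →ₗ[ℂ] A}

namespace IsCircularWith

lemma expect_cword_cons (hcirc : IsCircularWith B E y β) {ε : Bool} {b : A}
    {l : List (Bool × A)} (hb : b ∈ B) (hl : ∀ q ∈ l, q.2 ∈ B) :
    E (cword y ((ε, b) :: l)) =
      sumSplits (fun p x s =>
        if x.1 ≠ ε then β ε (b * E (cword y p)) * x.2 * E (cword y s) else 0) l :=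
  hcirc ε b hb l hl

lemma expect_cword_eq_zero_of_odd (hcirc : IsCircularWith B E y β) {l : List (Bool × A)}
    (hl : ∀ q ∈ l, q.2 ∈ B) (hodd : Odd l.length) : E (cword y l) = 0 := by
  induction hn : l.length using Nat.strong_induction_on generalizing l with
  | _ n ih =>
  obtain _ | ⟨⟨ε, b⟩, l⟩ := l
  · simp at hodd
  simp only [List.forall_mem_cons] at hl
  rw [hcirc.expect_cword_cons hl.1 hl.2]
  refine sumSplits_eq_zero fun p x s hps => ?_
  subst hps
  simp only [List.mem_append, List.mem_cons] at hl
  simp only [List.length_cons, List.length_append] at hodd hn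
  rcases Nat.even_or_odd p.length with hp | hp
  · rw [ih s.length (by omega) (fun q hq => hl.2 q (by simp [hq]))
      (by simpa [parity_simps, ← Nat.not_even_iff_odd, hp] using hodd) rfl]
    simp
  · rw [ih p.length (by omega) (fun q hq => hl.2 q (by simp [hq])) hp rfl]
    simp

theorem expect_cword_append (hcirc : IsCircularWith B E y β) (hE1 : E 1 = 1)
    {ε : Bool} {v w : List (Bool × A)} (hv : Alternating ε v) (hw : Alternating (!ε) w)
    (hev : Even v.length) (hvB : ∀ q ∈ v, q.2 ∈ B) (hwB : ∀ q ∈ w, q.2 ∈ B) :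
    E (cword y (v ++ w)) = E (cword y v) * E (cword y w) := by
  induction hn : v.length using Nat.strong_induction_on generalizing v with
  | _ n ih =>
  obtain _ | ⟨⟨ε', b⟩, v⟩ := v
  · simp [hE1]
  obtain ⟨rfl, hv⟩ := alternating_cons.1 hv
  rw [List.forall_mem_cons] at hvB
  have hvwB : ∀ q ∈ v ++ w, q.2 ∈ B := List.forall_mem_append.2 ⟨hvB.2, hwB⟩
  rw [List.cons_append, hcirc.expect_cword_cons hvB.1 hvwB, hcirc.expect_cword_cons hvB.1 hvB.2,
    sumSplits_append, ← sumSplits_mul_right, sumSplits_eq_zero (l := w), add_zero]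
  · refine sumSplits_congr fun p x s hps => ?_
    subst hps
    split_ifs with hx
    · have hx' : x.1 = !ε' := Bool.eq_not_iff.2 hx
      have hp : Even p.length := hv.fst_eq_iff.1 hx'
      have hs : Alternating ε' s := by simpa [hx'] using hv.of_append_cons
      simp only [List.length_cons, List.length_append] at hn hev
      have hsB : ∀ q ∈ s, q.2 ∈ B := fun q hq => hvB.2 q (by simp [hq])
      rw [ih s.length (by omega) hs (by simpa [parity_simps, hp] using hev) hsB rfl]
      simp only [mul_assoc]
    · simp
  · intro p x s hps
    subst hps
    split_ifs with hx
    · have hp : Even p.length := hw.fst_eq_iff.1 (Bool.eq_not_iff.2 hx)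
      have hvpB : ∀ q ∈ v ++ p, q.2 ∈ B := fun q hq =>
        hvwB q (List.mem_append.2 ((List.mem_append.1 hq).imp id (List.mem_append_left _)))
      rw [hcirc.expect_cword_eq_zero_of_odd hvpB (by simpa [parity_simps, hp] using hev)]
      simp
    · rfl

theorem expect_cword_cons_append (hcirc : IsCircularWith B E y β) (hE1 : E 1 = 1)
    (hErange : ∀ a, E a ∈ B) {δ : Bool} {c : A} {v w : List (Bool × A)}
    (hv : Alternating δ v) (hev : Even v.length) (hw : Alternating (!δ) w) (hc : c ∈ B)
    (hvB : ∀ q ∈ v, q.2 ∈ B) (hwB : ∀ q ∈ w, q.2 ∈ B) :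
    E (cword y ((δ, c) :: (v ++ w))) = E (cword y ((δ, c * E (cword y v)) :: w)) := by
  rw [hcirc.expect_cword_cons hc (List.forall_mem_append.2 ⟨hvB, hwB⟩),
    hcirc.expect_cword_cons (mul_mem hc (hErange _)) hwB, sumSplits_append,
    sumSplits_eq_zero (l := v), zero_add]
  · refine sumSplits_congr fun p x s hps => ?_
    rw [hcirc.expect_cword_append hE1 hv (hps ▸ hw).of_append_left hev hvB
      (fun q hq => hwB q (hps ▸ List.mem_append_left _ hq)), ← mul_assoc c]
  · intro p x s hps
    split_ifs with hx
    · have hp : Odd p.length := Nat.not_even_iff_odd.1 fun hp => hx ((hps ▸ hv).fst_eq_iff.2 hp)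
      rw [hcirc.expect_cword_eq_zero_of_odd (fun q hq => hvB q (hps ▸ List.mem_append_left _ hq))
        hp]
      simp
    · rfl

theorem expect_cword_absorb (hcirc : IsCircularWith B E y β) (hE1 : E 1 = 1)
    (hErange : ∀ a, E a ∈ B) {ε δ : Bool} {c : A} {u v w : List (Bool × A)}
    (hu : Alternating ε (u ++ [(δ, c)])) (hv : Alternating δ v) (hev : Even v.length)
    (hw : Alternating (!δ) w) (huB : ∀ q ∈ u, q.2 ∈ B) (hc : c ∈ B)
    (hvB : ∀ q ∈ v, q.2 ∈ B) (hwB : ∀ q ∈ w, q.2 ∈ B) :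
    E (cword y (u ++ (δ, c) :: (v ++ w))) = E (cword y (u ++ (δ, c * E (cword y v)) :: w)) := by
  induction hn : u.length using Nat.strong_induction_on generalizing u ε w with
  | _ n ih =>
  obtain _ | ⟨⟨ε', b⟩, u⟩ := u
  · exact hcirc.expect_cword_cons_append hE1 hErange hv hev hw hc hvB hwB
  have hprefixB : ∀ {p s : List (Bool × A)} {x : Bool × A}, w = p ++ x :: s → ∀ q ∈ p, q.2 ∈ B :=
    fun hps q hq => hwB q (hps ▸ List.mem_append_left _ hq)
  simp only [List.cons_append, alternating_cons] at hu
  obtain ⟨rfl, hu⟩ := hu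
  rw [List.forall_mem_cons] at huB
  have huvwB : ∀ q ∈ u ++ (δ, c) :: (v ++ w), q.2 ∈ B :=
    List.forall_mem_append.2 ⟨huB.2, List.forall_mem_cons.2 ⟨hc, List.forall_mem_append.2 ⟨hvB, hwB⟩⟩⟩
  have huwB : ∀ q ∈ u ++ (δ, c * E (cword y v)) :: w, q.2 ∈ B :=
    List.forall_mem_append.2 ⟨huB.2, List.forall_mem_cons.2 ⟨mul_mem hc (hErange _), hwB⟩⟩
  simp only [List.length_cons] at hn
  rw [List.cons_append, List.cons_append, hcirc.expect_cword_cons huB.1 huvwB,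
    hcirc.expect_cword_cons huB.1 huwB, sumSplits_append, sumSplits_append, sumSplits_cons,
    sumSplits_cons, sumSplits_append, sumSplits_eq_zero (l := v), zero_add]
  · congr 1
    · refine sumSplits_congr fun p x s hps => ?_
      subst hps
      rw [List.append_assoc, List.cons_append] at hu
      have hsB : ∀ q ∈ s, q.2 ∈ B := fun q hq => huB.2 q (by simp [hq])
      simp only [List.length_append, List.length_cons] at hn
      rw [ih s.length (by omega) hu.of_append_cons hw hsB hwB rfl]
    · congr 1
      · rw [hcirc.expect_cword_append hE1 hv hw hev hvB hwB]
        simp only [mul_assoc]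
      · refine sumSplits_congr fun p x s hps => ?_
        rw [ih u.length (by omega) hu (hps ▸ hw).of_append_left huB.2 (hprefixB hps) rfl]
  · intro p x s hps
    split_ifs with hx
    · have hupB : ∀ q ∈ u ++ (δ, c) :: p, q.2 ∈ B := List.forall_mem_append.2
        ⟨huB.2, List.forall_mem_cons.2 ⟨hc, fun q hq => hvB q (hps ▸ List.mem_append_left _ hq)⟩⟩
      rw [hcirc.expect_cword_eq_zero_of_odd hupB
        (hu.odd_length_of_fst_eq (hps ▸ hv) (Bool.eq_not_iff.2 hx))]
      simp
    · rfl

theorem expect_cword_middle_block (hcirc : IsCircularWith B E y β) (hE1 : E 1 = 1)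
    (hErange : ∀ a, E a ∈ B) (hEmul : ∀ b ∈ B, ∀ a, E (b * a) = b * E a)
    {ε : Bool} {u v w : List (Bool × A)} (hu : Alternating ε u) (heu : Even u.length)
    (hv : Alternating (!ε) v) (hev : Even v.length) (hw : Alternating ε w)
    (huB : ∀ q ∈ u, q.2 ∈ B) (hvB : ∀ q ∈ v, q.2 ∈ B) (hwB : ∀ q ∈ w, q.2 ∈ B) :
    E (cword y (u ++ v ++ w)) = E (cword y u * E (cword y v) * cword y w) := by
  obtain rfl | ⟨u, ⟨δ, c⟩, rfl⟩ := List.eq_nil_or_concat' u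
  · rw [List.nil_append, hcirc.expect_cword_append hE1 hv (by simpa using hw) hev hvB hwB,
      cword_nil, one_mul, hEmul _ (hErange _)]
  have hδ : δ = !ε := Bool.eq_not_iff.2 fun hδ =>
    Nat.even_add_one.1 (by simpa using heu) ((hu.fst_eq_iff (s := [])).1 hδ)
  subst hδ
  rw [List.forall_mem_append, List.forall_mem_singleton] at huB
  have habsorb := hcirc.expect_cword_absorb hE1 hErange hu hv hev (by simpa using hw) huB.1 huB.2
    hvB hwB
  rw [List.append_assoc, List.append_assoc, List.singleton_append, habsorb]
  simp only [cword_append, cword_cons, cword_nil, mul_one, mul_assoc]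

end IsCircularWith

end Circular

theorem circular_middle_block_factorization_general
    {A : Type*} [Ring A] [StarRing A] [Algebra ℂ A] [StarModule ℂ A]
    (B : StarSubalgebra ℂ A) (E : A →ₗ[ℂ] A)
    (hErange : ∀ a : A, E a ∈ B)
    (hEid : ∀ b ∈ B, E b = b)
    (hEbimod : ∀ a : A, ∀ b₁ ∈ B, ∀ b₂ ∈ B, E (b₁ * a * b₂) = b₁ * E a * b₂)
    (y : A) (β : Bool → A →ₗ[ℂ] A)
    (hcirc : IsCircularWith B E y β) :
    ∀ n m k : ℕ,
      E ((y * star y) ^ n * (star y * y) ^ m * (y * star y) ^ k)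
        = E ((y * star y) ^ n * E ((star y * y) ^ m) * (y * star y) ^ k) := by
  intro n m k
  have hE1 : E 1 = 1 := hEid 1 (one_mem B)
  have hEmul : ∀ b ∈ B, ∀ a, E (b * a) = b * E a := fun b hb a => by
    simpa using hEbimod a b hb 1 (one_mem B)
  have hB : ∀ {ε : Bool} {n : ℕ}, ∀ q ∈ altWord ε n, q.2 ∈ B := fun _ hq =>
    snd_of_mem_altWord hq ▸ one_mem B
  have key := hcirc.expect_cword_middle_block hE1 hErange hEmul
    (alternating_altWord true n) (by simp [length_altWord]) (alternating_altWord false m)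
    (by simp [length_altWord]) (alternating_altWord true k) hB hB hB
  rw [cword_append, cword_append, cword_altWord, cword_altWord, cword_altWord] at key
  simpa [cword] using key

/-- For a B-valued circular element `y`,
`E((yy*)ⁿ (y*y)ᵐ (yy*)ᵏ) = E((yy*)ⁿ E((y*y)ᵐ) (yy*)ᵏ)`. -/
theorem circular_middle_block_factorization
    {A : Type*} [Ring A] [StarRing A] [Algebra ℂ A] [StarModule ℂ A]
    (B : StarSubalgebra ℂ A) (E : A →ₗ[ℂ] A)
    (hErange : ∀ a : A, E a ∈ B)
    (hEid : ∀ b ∈ B, E b = b)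
    (hEstar : ∀ a : A, E (star a) = star (E a))
    (hEbimod : ∀ a : A, ∀ b₁ ∈ B, ∀ b₂ ∈ B, E (b₁ * a * b₂) = b₁ * E a * b₂)
    (y : A) (β : Bool → A →ₗ[ℂ] A)
    (hcirc : IsCircularWith B E y β) :
    ∀ n m k : ℕ,
      E ((y * star y) ^ n * (star y * y) ^ m * (y * star y) ^ k)
        = E ((y * star y) ^ n * E ((star y * y) ^ m) * (y * star y) ^ k) :=
  circular_middle_block_factorization_general B E hErange hEid hEbimod y β hcirc
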